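/- arXiv:2602.01488 — 2 statements merged into one kernel-verified Lean document; each statement's English description precedes it below -/
import Mathlib

section
/- For each integer i ≥ 2, the word w_i with its last two letters removed (denoted w_i^{**}) is a palindrome, and w_{i+1} = w_{i−1} · w̃_i, where w̃_i is the word obtained from w_i by swapping its last two letters. -/
noncomputable section

/-- `F i` is the Fibonacci number `F_i` of the paper (`F_0 = 1`, `F_1 = 1`, `F_2 = 2`, ...). -/
def F (i : ℕ) : ℕ := Nat.fib (i + 1)

/-- The Fibonacci sequence of words on the alphabet `{a, b}` where `a = true` and
`b = false`: `W 1 = a`, `W 2 = ab`, `W (i+2) = W (i+1) ++ W i`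
(setting `W 0 = b`, consistent with the recurrence). -/
def W : ℕ → List Bool
  | 0 => [false]
  | 1 => [true]
  | n + 2 => W (n + 1) ++ W n

/-- `twoSwap l` is the word `l` with its last two letters swapped (`w̃` of the paper). -/
def twoSwap (l : List Bool) : List Bool :=
  l.dropLast.dropLast ++ (l.drop (l.length - 2)).reverse

/-- The final two-letter block. -/
def ei (i : ℕ) : List Bool := if Even i then [true, false] else [false, true]

lemma ei_reverse (i : ℕ) : (ei i).reverse = ei (i + 1) := by
  rcases Nat.even_or_odd i with h | h
  · simp [ei, h, Nat.even_add_one, Nat.not_even_iff_odd]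
  · simp [ei, Nat.not_even_iff_odd.mpr h, Nat.even_add_one,
      Nat.not_odd_iff_even.mpr, h.add_one]

lemma ei_two (i : ℕ) : ei (i + 2) = ei i := by
  simp [ei, Nat.even_add]

lemma drop2 (x : List Bool) (c d : Bool) : ((x ++ [c, d]).dropLast.dropLast) = x := by
  have h : x ++ [c, d] = (x ++ [c]) ++ [d] := by simp
  rw [h, List.dropLast_concat, List.dropLast_concat]

lemma drop2e (x : List Bool) (i : ℕ) : ((x ++ ei i).dropLast.dropLast) = x := by
  rcases Nat.even_or_odd i with h | h
  · rw [ei, if_pos h, drop2]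
  · rw [ei, if_neg (Nat.not_even_iff_odd.mpr h), drop2]

lemma twoSwap_append_ei (x : List Bool) (i : ℕ) :
    twoSwap (x ++ ei i) = x ++ ei (i + 1) := by
  have hlen : (x ++ ei i).length = x.length + 2 := by
    rcases Nat.even_or_odd i with h | h
    · rw [ei, if_pos h]; simp
    · rw [ei, if_neg (Nat.not_even_iff_odd.mpr h)]; simp
  have hdrop : (x ++ ei i).drop ((x ++ ei i).length - 2) = ei i := by
    rw [hlen]
    simpa using List.drop_left x (ei i)
  rw [twoSwap, drop2e, hdrop, ei_reverse]

lemma W_tail : ∀ n, ∃ x, W (n + 2) = x ++ ei (n + 2) := by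
  have key : ∀ n, (∃ x, W (n + 2) = x ++ ei (n + 2)) ∧ (∃ x, W (n + 3) = x ++ ei (n + 3)) := by
    intro n
    induction n with
    | zero =>
      constructor
      · exact ⟨[], by simp [W, ei]⟩
      · exact ⟨[true], by simp [W, ei]; decide⟩
    | succ m ih =>
      refine ⟨ih.2, ?_⟩
      obtain ⟨x, hx⟩ := ih.1
      refine ⟨W (m + 3) ++ x, ?_⟩
      have h4 : W (m + 4) = W (m + 3) ++ W (m + 2) := rfl
      rw [h4, hx, ← List.append_assoc]
      congr 1
      exact (ei_two (m + 2)).symm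
  exact fun n => (key n).1

lemma W_eq_dropLast (n : ℕ) : W (n + 2) = (W (n + 2)).dropLast.dropLast ++ ei (n + 2) := by
  obtain ⟨x, hx⟩ := W_tail n
  conv_lhs => rw [hx]
  rw [hx, drop2e]

lemma main : ∀ n, List.Palindrome ((W (n + 2)).dropLast.dropLast) ∧
    W (n + 2) ++ W (n + 1) = W (n + 1) ++ (W (n + 2)).dropLast.dropLast ++ ei (n + 3) := by
  have key : ∀ n,
      (List.Palindrome ((W (n + 2)).dropLast.dropLast) ∧
        W (n + 2) ++ W (n + 1) = W (n + 1) ++ (W (n + 2)).dropLast.dropLast ++ ei (n + 3)) ∧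
      (List.Palindrome ((W (n + 3)).dropLast.dropLast) ∧
        W (n + 3) ++ W (n + 2) = W (n + 2) ++ (W (n + 3)).dropLast.dropLast ++ ei (n + 4)) := by
    intro n
    induction n with
    | zero =>
      refine ⟨⟨?_, ?_⟩, ⟨?_, ?_⟩⟩
      · show List.Palindrome (([true, false] : List Bool).dropLast.dropLast)
        simpa using List.Palindrome.nil
      · show ([true, false] : List Bool) ++ [true] =
          [true] ++ ([true, false] : List Bool).dropLast.dropLast ++ ei 3
        simp [ei]
        decide
      · show List.Palindrome ((([true, false] ++ [true] : List Bool)).dropLast.dropLast)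
        simpa using List.Palindrome.singleton true
      · show (([true, false] ++ [true] : List Bool)) ++ [true, false] =
          [true, false] ++ (([true, false] ++ [true] : List Bool)).dropLast.dropLast ++ ei 4
        simp [ei]
        decide
    | succ m ih =>
      obtain ⟨⟨H1, H2⟩, H3, H4⟩ := ih
      have hW4 : W (m + 4) = W (m + 3) ++ W (m + 2) := rfl
      have hp3 : W (m + 3) = (W (m + 3)).dropLast.dropLast ++ ei (m + 3) := W_eq_dropLast (m + 1)
      have hp2 : W (m + 2) = (W (m + 2)).dropLast.dropLast ++ ei (m + 2) := W_eq_dropLast m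
      set p2 := (W (m + 2)).dropLast.dropLast with hp2def
      set p3 := (W (m + 3)).dropLast.dropLast with hp3def
      have hW4' : W (m + 4) = W (m + 2) ++ p3 ++ ei (m + 4) := by
        rw [hW4, H4]
      have hp4a : (W (m + 4)).dropLast.dropLast = W (m + 2) ++ p3 := by
        rw [hW4', drop2e]
      have hW4'' : W (m + 4) = (p3 ++ ei (m + 3) ++ p2) ++ ei (m + 2) := by
        rw [hW4]
        conv_lhs => rw [hp3, hp2]
        simp [List.append_assoc]
      have hp4b : (W (m + 4)).dropLast.dropLast = p3 ++ ei (m + 3) ++ p2 := by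
        rw [hW4'', drop2e]
      refine ⟨⟨H3, H4⟩, ?_, ?_⟩
      · -- palindrome of p (m+4)
        show List.Palindrome ((W (m + 4)).dropLast.dropLast)
        rw [hp4a]
        have e1 : W (m + 2) ++ p3 = p3 ++ ei (m + 3) ++ p2 := by
          rw [← hp4a, hp4b]
        have hrev : (W (m + 2) ++ p3).reverse = W (m + 2) ++ p3 := by
          conv_lhs => rw [e1]
          simp only [List.reverse_append]
          rw [H1.reverse_eq, H3.reverse_eq, ei_reverse]
          calc p2 ++ ((ei (m + 4)) ++ p3) = p2 ++ ei (m + 2) ++ p3 := by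
                rw [ei_two, List.append_assoc]
            _ = W (m + 2) ++ p3 := by rw [← hp2]
        exact List.Palindrome.of_reverse_eq hrev
      · -- the word equation for m+4
        show W (m + 4) ++ W (m + 3) = W (m + 3) ++ (W (m + 4)).dropLast.dropLast ++ ei (m + 5)
        have e2 : W (m + 2) ++ W (m + 3) = (W (m + 2) ++ p3) ++ ei (m + 5) := by
          conv_lhs => rw [hp3]
          rw [← List.append_assoc]
          congr 1
          exact (ei_two (m + 3)).symm
        calc W (m + 4) ++ W (m + 3) = W (m + 3) ++ (W (m + 2) ++ W (m + 3)) := by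
              rw [hW4, List.append_assoc]
          _ = W (m + 3) ++ ((W (m + 2) ++ p3) ++ ei (m + 5)) := by rw [e2]
          _ = W (m + 3) ++ (W (m + 4)).dropLast.dropLast ++ ei (m + 5) := by
              rw [hp4a]
              simp [List.append_assoc]
  exact fun n => (key n).1

theorem palindrome_and_recurrence (i : ℕ) (hi : 2 ≤ i) :
    List.Palindrome ((W i).dropLast.dropLast) ∧
    W (i + 1) = W (i - 1) ++ twoSwap (W i) := by
  obtain ⟨n, rfl⟩ : ∃ n, i = n + 2 := ⟨i - 2, by omega⟩
  obtain ⟨H1, H2⟩ := main n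
  refine ⟨H1, ?_⟩
  have hts : twoSwap (W (n + 2)) = (W (n + 2)).dropLast.dropLast ++ ei (n + 3) := by
    conv_lhs => rw [W_eq_dropLast n]
    rw [twoSwap_append_ei]
  show W (n + 3) = W (n + 1) ++ twoSwap (W (n + 2))
  have hW3 : W (n + 3) = W (n + 2) ++ W (n + 1) := rfl
  rw [hW3, H2, hts, List.append_assoc]
end
end

section
/- Let k ≥ 4. The map ι restricts to an order preserving bijection from the set of prefixes v of the infinite Fibonacci word with w_k < v < w_{k+1} onto the set of prefixes v with w_{k−3} < v < w_{k−1}w_{k−3}. Explicitly, for such w: if w < w_k w_{k−2}^* then w = w_k u with ε < u ≤ w_{k−2}^{**} and ι(w) = w_{k−3} u; if w = w_k w_{k−2}^* then ι(w) = w_{k−1}^*; if w > w_k w_{k−2}^* then w = w_k w_{k−2} u with ε ≤ u < w_{k−3} and ι(w) = w_{k−1} u. -/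
noncomputable section

/-- `x` belongs to the set `F̄ = {0,1,2,3,5,8,...}` of all Fibonacci numbers (including `0`). -/
def IsFib (x : ℕ) : Prop := ∃ i : ℕ, Nat.fib i = x

open scoped Classical in
/-- The map `ῑ : ℕ → ℕ`: `ῑ(x) = x` if `x ∈ F̄`, and `ῑ(x) = x - 2 F_{i-2}`
if `F_i < x < F_{i+1}` for the (unique) integer `i ≥ 3`. -/
noncomputable def iotaBar (x : ℕ) : ℕ :=
  if IsFib x then x
  else x - 2 * F (sInf {i : ℕ | x < F (i + 1)} - 2)

/-- `ᾱ(x)` is the eventual constant value of the iterates of `ῑ` at `x`. -/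
noncomputable def alphaBar (x : ℕ) : ℕ := iotaBar^[x] x

/-- `pref n` is the prefix of length `n` of the infinite Fibonacci word `w_∞`. -/
def pref (n : ℕ) : List Bool := (W (n + 2)).take n

/-- `v` is a (finite) prefix of the infinite Fibonacci word `w_∞`. -/
def FibPrefix (v : List Bool) : Prop := ∃ i : ℕ, v <+: W i

/-- The map `ι` on prefixes of `w_∞`: `ι(v)` is the prefix of `w_∞` of length `ῑ(|v|)`. -/
noncomputable def iotaW (v : List Bool) : List Bool := pref (iotaBar v.length)

/-- The map `α` on prefixes of `w_∞`: `α(v)` is the prefix of `w_∞` of length `ᾱ(|v|)`,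
an element of `{ε, w_1, w_2, ...}`. -/
noncomputable def alphaW (v : List Bool) : List Bool := pref (alphaBar v.length)

/-- `V_ℓ` is the set of prefixes `v` of `w_∞` with `α(v) ≥ w_ℓ` in the prefix order. -/
def V (ℓ : ℕ) : Set (List Bool) := {v : List Bool | FibPrefix v ∧ W ℓ <+: alphaW v}

lemma F_add_two (n : ℕ) : F (n + 2) = F (n + 1) + F n := by
  show Nat.fib (n + 2 + 1) = Nat.fib (n + 1 + 1) + Nat.fib (n + 1)
  rw [show n + 2 + 1 = (n + 1) + 2 from rfl, Nat.fib_add_two]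
  exact Nat.add_comm _ _

lemma F_pos (n : ℕ) : 0 < F n := Nat.fib_pos.2 (Nat.succ_pos n)

lemma F_mono : Monotone F := fun a b h => Nat.fib_mono (by omega)

lemma W_length (n : ℕ) : (W n).length = F n := by
  induction n using Nat.strong_induction_on with
  | _ n ih =>
    match n with
    | 0 => rfl
    | 1 => rfl
    | n + 2 =>
      simp [W, F_add_two, ih (n+1) (by omega), ih n (by omega)]

lemma W_prefix_succ (n : ℕ) (hn : 1 ≤ n) : W n <+: W (n + 1) := by
  match n, hn with
  | 1, _ => exact ⟨[false], rfl⟩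
  | n + 2, _ => exact ⟨W (n + 1), rfl⟩

lemma W_prefix (m n : ℕ) (hm : 1 ≤ m) (h : m ≤ n) : W m <+: W n := by
  induction n with
  | zero => omega
  | succ n ih =>
    rcases Nat.lt_or_ge m (n + 1) with h' | h'
    · exact (ih (by omega)).trans (W_prefix_succ n (by omega))
    · have : m = n + 1 := by omega
      subst this; rfl

lemma lt_F (n : ℕ) : n < F (n + 1) := by
  induction n with
  | zero => simp [F]
  | succ n ih =>
    have := F_pos n
    rw [F_add_two]; omega

lemma le_F_add_two (n : ℕ) : n ≤ F (n + 2) := by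
  have := lt_F n
  have := F_mono (show n + 1 ≤ n + 2 by omega)
  omega

lemma take_W_eq (m n j : ℕ) (hm : 1 ≤ m) (hmn : m ≤ n) (hj : j ≤ F m) :
    (W m).take j = (W n).take j := by
  obtain ⟨t, ht⟩ := W_prefix m n hm hmn
  rw [← ht, List.take_append_of_le_length (by rw [W_length]; exact hj)]

/-- `pref n` is `take n` of any `W m` with `n ≤ F m`. -/
lemma pref_eq_take (m n : ℕ) (hm : 1 ≤ m) (hn : n ≤ F m) : pref n = (W m).take n := by
  unfold pref
  rcases Nat.le_total m (n + 2) with h | h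
  · exact (take_W_eq m (n + 2) n hm h hn).symm
  · exact take_W_eq (n + 2) m n (by omega) h (le_F_add_two n)

lemma pref_length (n : ℕ) : (pref n).length = n := by
  unfold pref
  rw [List.length_take, W_length]
  exact Nat.min_eq_left (le_F_add_two n)

lemma pref_prefix_W (m n : ℕ) (hm : 1 ≤ m) (hn : n ≤ F m) : pref n <+: W m := by
  rw [pref_eq_take m n hm hn]; exact List.take_prefix _ _

lemma prefix_eq_pref {v : List Bool} (m : ℕ) (hm : 1 ≤ m) (h : v <+: W m) :
    v = pref v.length := by
  rw [pref_eq_take m v.length hm (by rw [← W_length]; exact h.length_le)]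
  exact List.prefix_iff_eq_take.1 h

lemma pref_mono {n m : ℕ} (h : n ≤ m) : pref n <+: pref m := by
  have h1 : pref n = (pref m).take n := by
    rw [pref_eq_take (m + 2) n (by omega) (h.trans (le_F_add_two m)),
      pref_eq_take (m + 2) m (by omega) (le_F_add_two m), List.take_take,
      Nat.min_eq_left h]
  rw [h1]; exact List.take_prefix _ _

lemma W_eq_pref (m : ℕ) (hm : 1 ≤ m) : W m = pref (F m) := by
  have := prefix_eq_pref m hm (List.prefix_refl _)
  rwa [W_length] at this

/-- the `sInf` computation -/
lemma iotaBar_eq (k x : ℕ) (hk : 3 ≤ k) (h1 : F k < x) (h2 : x < F (k + 1)) :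
    iotaBar x = x - 2 * F (k - 2) := by
  have hnf : ¬ IsFib x := by
    rintro ⟨j, rfl⟩
    have h1' : Nat.fib (k + 1) < Nat.fib j := h1
    have h2' : Nat.fib j < Nat.fib (k + 2) := h2
    rcases Nat.lt_or_ge j (k + 2) with h | h
    · have := Nat.fib_mono (show j ≤ k + 1 by omega); omega
    · have := Nat.fib_mono h; omega
  rw [iotaBar, if_neg hnf]
  have hkm : k ∈ {i : ℕ | x < F (i + 1)} := h2
  have hinf : sInf {i : ℕ | x < F (i + 1)} = k := by
    refine le_antisymm (Nat.sInf_le hkm) ?_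
    by_contra h
    push_neg at h
    have hm := Nat.sInf_mem (⟨k, hkm⟩ : Set.Nonempty _)
    simp only [Set.mem_setOf_eq] at hm
    have : F (sInf {i : ℕ | x < F (i + 1)} + 1) ≤ F k := F_mono (by omega)
    omega
  rw [hinf]

lemma two_le_F (n : ℕ) (hn : 2 ≤ n) : 2 ≤ F n := by
  have : F 2 ≤ F n := F_mono hn
  have : F 2 = 2 := rfl
  omega

lemma comm_lemma : ∀ n, 1 ≤ n →
    (W n ++ W (n + 1)).take (F n + F (n + 1) - 2) = (W (n + 2)).take (F n + F (n + 1) - 2) := by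
  intro n hn
  induction n with
  | zero => omega
  | succ n ih =>
    rcases Nat.lt_or_ge 1 (n + 1) with h | h
    · have hn1 : 1 ≤ n := by omega
      have IH := ih hn1
      have e : F (n + 1) + F (n + 1 + 1) - 2 = (W (n + 1)).length + (F n + F (n + 1) - 2) := by
        rw [W_length, F_add_two]
        have := F_pos n; have := F_pos (n + 1)
        omega
      have hR : W (n + 1 + 2) = W (n + 1) ++ (W n ++ W (n + 1)) := by
        show W (n + 2) ++ W (n + 1) = _
        rw [show W (n + 2) = W (n + 1) ++ W n from rfl, List.append_assoc]
      rw [e, hR, show W (n + 1 + 1) = W (n + 1) ++ W n from rfl,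
        List.take_length_add_append, List.take_length_add_append, IH,
        show W (n + 2) = W (n + 1) ++ W n from rfl]
    · have : n = 0 := by omega
      subst this
      decide

lemma dropLast_dropLast (l : List Bool) : l.dropLast.dropLast = l.take (l.length - 2) := by
  rw [List.dropLast_eq_take, List.dropLast_eq_take, List.length_take, List.take_take]
  congr 1
  omega

lemma prefix_take {u l : List Bool} {n : ℕ} (h : u <+: l) (hn : u.length ≤ n) :
    u <+: l.take n := by
  rw [List.prefix_iff_eq_take] at h ⊢
  rw [List.take_take, Nat.min_eq_left hn]
  exact h

lemma eq_append_drop {p w : List Bool} (h : p <+: w) : w = p ++ w.drop p.length := by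
  conv_lhs => rw [← List.take_append_drop p.length w]
  rw [← List.prefix_iff_eq_take.1 h]

lemma mem_char {p q M : ℕ} (hM : 1 ≤ M) (hq : q ≤ F M) (v : List Bool) :
    (pref p <+: v ∧ v <+: pref q ∧ v ≠ pref p ∧ v ≠ pref q) ↔
      ∃ x, p < x ∧ x < q ∧ v = pref x := by
  constructor
  · rintro ⟨h1, h2, h3, h4⟩
    have hv : v = pref v.length := prefix_eq_pref M hM (h2.trans (pref_prefix_W M q hM hq))
    refine ⟨v.length, ?_, ?_, hv⟩
    · have hle := h1.length_le
      rw [pref_length] at hle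
      rcases hle.lt_or_eq with h | h
      · exact h
      · exact absurd (hv.trans (congrArg pref h.symm)) h3
    · have hle := h2.length_le
      rw [pref_length] at hle
      rcases hle.lt_or_eq with h | h
      · exact h
      · exact absurd (hv.trans (congrArg pref h)) h4
  · rintro ⟨x, hpx, hxq, rfl⟩
    refine ⟨pref_mono hpx.le, pref_mono hxq.le, ?_, ?_⟩
    · intro h
      have := congrArg List.length h
      rw [pref_length, pref_length] at this
      omega
    · intro h
      have := congrArg List.length h
      rw [pref_length, pref_length] at this
      omega

theorem iotaW_bijection (k : ℕ) (hk : 4 ≤ k) :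
    Set.BijOn iotaW
      {v : List Bool | W k <+: v ∧ v <+: W (k + 1) ∧ v ≠ W k ∧ v ≠ W (k + 1)}
      {v : List Bool | W (k - 3) <+: v ∧ v <+: W (k - 1) ++ W (k - 3) ∧
        v ≠ W (k - 3) ∧ v ≠ W (k - 1) ++ W (k - 3)} ∧
    (∀ u v : List Bool,
      (W k <+: u ∧ u <+: W (k + 1) ∧ u ≠ W k ∧ u ≠ W (k + 1)) →
      (W k <+: v ∧ v <+: W (k + 1) ∧ v ≠ W k ∧ v ≠ W (k + 1)) →
      u <+: v → iotaW u <+: iotaW v) ∧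
    (∀ w : List Bool, (W k <+: w ∧ w <+: W (k + 1) ∧ w ≠ W k ∧ w ≠ W (k + 1)) →
      ((w <+: W k ++ (W (k - 2)).dropLast ∧ w ≠ W k ++ (W (k - 2)).dropLast →
          ∃ u : List Bool, u ≠ [] ∧ u <+: (W (k - 2)).dropLast.dropLast ∧
            w = W k ++ u ∧ iotaW w = W (k - 3) ++ u) ∧
       (w = W k ++ (W (k - 2)).dropLast → iotaW w = (W (k - 1)).dropLast) ∧
       (W k ++ (W (k - 2)).dropLast <+: w ∧ w ≠ W k ++ (W (k - 2)).dropLast →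
          ∃ u : List Bool, u <+: W (k - 3) ∧ u ≠ W (k - 3) ∧
            w = W k ++ W (k - 2) ++ u ∧ iotaW w = W (k - 1) ++ u))) := by
  obtain ⟨a, rfl⟩ : ∃ a, k = a + 4 := ⟨k - 4, by omega⟩
  simp only [show a + 4 + 1 = a + 5 from rfl, show a + 4 - 3 = a + 1 from rfl,
    show a + 4 - 2 = a + 2 from rfl, show a + 4 - 1 = a + 3 from rfl]
  have hFa := F_pos a
  have hF1 := F_pos (a + 1)
  have h22 := two_le_F (a + 2) (by omega)
  have e2 := F_add_two a
  have e3 : F (a + 3) = F (a + 2) + F (a + 1) := F_add_two (a + 1)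
  have e4 : F (a + 4) = F (a + 3) + F (a + 2) := F_add_two (a + 2)
  have e5 : F (a + 5) = F (a + 4) + F (a + 3) := F_add_two (a + 3)
  -- pref representations
  have pW1 : W (a + 1) = pref (F (a + 1)) := W_eq_pref _ (by omega)
  have pW4 : W (a + 4) = pref (F (a + 4)) := W_eq_pref _ (by omega)
  have pW5 : W (a + 5) = pref (F (a + 5)) := W_eq_pref _ (by omega)
  have hL_pre : W (a + 3) ++ W (a + 1) <+: W (a + 4) := by
    show _ <+: W (a + 3) ++ W (a + 2)
    exact (List.prefix_append_right_inj _).2 (W_prefix (a + 1) (a + 2) (by omega) (by omega))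
  have pL : W (a + 3) ++ W (a + 1) = pref (F (a + 3) + F (a + 1)) := by
    have h := prefix_eq_pref (a + 4) (by omega) hL_pre
    rwa [List.length_append, W_length, W_length] at h
  have hM_pre : W (a + 4) ++ W (a + 2) <+: W (a + 5) := by
    show _ <+: W (a + 4) ++ W (a + 3)
    exact (List.prefix_append_right_inj _).2 (W_prefix (a + 2) (a + 3) (by omega) (by omega))
  have pM : W (a + 4) ++ W (a + 2) = pref (F (a + 4) + F (a + 2)) := by
    have h := prefix_eq_pref (a + 5) (by omega) hM_pre
    rwa [List.length_append, W_length, W_length] at h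
  have hR_pre : W (a + 4) ++ (W (a + 2)).dropLast <+: W (a + 5) :=
    ((List.prefix_append_right_inj _).2 (List.dropLast_prefix _)).trans hM_pre
  have pR : W (a + 4) ++ (W (a + 2)).dropLast = pref (F (a + 4) + F (a + 2) - 1) := by
    have h := prefix_eq_pref (a + 5) (by omega) hR_pre
    rw [List.length_append, List.length_dropLast, W_length, W_length] at h
    rw [h]
    congr 1
    omega
  have pD3 : (W (a + 3)).dropLast = pref (F (a + 3) - 1) := by
    have h := prefix_eq_pref (a + 3) (by omega) (List.dropLast_prefix _)
    rwa [List.length_dropLast, W_length] at h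
  -- key prefix facts
  have key1 : ∀ u : List Bool, u <+: (W (a + 2)).dropLast.dropLast →
      W (a + 1) ++ u = pref (F (a + 1) + u.length) := by
    intro u hu
    have hdd : W (a + 1) ++ (W (a + 2)).dropLast.dropLast
        = (W (a + 1) ++ W (a + 2)).take (F (a + 1) + F (a + 2) - 2) := by
      rw [dropLast_dropLast, W_length,
        show F (a + 1) + F (a + 2) - 2 = (W (a + 1)).length + (F (a + 2) - 2) by
          rw [W_length]; omega,
        List.take_length_add_append]
    have hpre : W (a + 1) ++ u <+: W (a + 3) := by
      have h1 : W (a + 1) ++ u <+: W (a + 1) ++ (W (a + 2)).dropLast.dropLast :=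
        (List.prefix_append_right_inj _).2 hu
      have h2 : W (a + 1) ++ (W (a + 2)).dropLast.dropLast <+: W (a + 3) := by
        rw [hdd, comm_lemma (a + 1) (by omega)]
        exact List.take_prefix _ _
      exact h1.trans h2
    have h := prefix_eq_pref (a + 3) (by omega) hpre
    rwa [List.length_append, W_length] at h
  have key3 : ∀ u : List Bool, u <+: W (a + 1) →
      W (a + 3) ++ u = pref (F (a + 3) + u.length) := by
    intro u hu
    have hpre : W (a + 3) ++ u <+: W (a + 4) :=
      ((List.prefix_append_right_inj _).2 hu).trans hL_pre
    have h := prefix_eq_pref (a + 4) (by omega) hpre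
    rwa [List.length_append, W_length] at h
  -- set characterizations
  have hS : ∀ v : List Bool,
      (W (a + 4) <+: v ∧ v <+: W (a + 5) ∧ v ≠ W (a + 4) ∧ v ≠ W (a + 5)) ↔
      ∃ x, F (a + 4) < x ∧ x < F (a + 5) ∧ v = pref x := by
    intro v
    rw [pW4, pW5]
    exact mem_char (M := a + 5) (by omega) le_rfl v
  have hT : ∀ v : List Bool,
      (W (a + 1) <+: v ∧ v <+: W (a + 3) ++ W (a + 1) ∧ v ≠ W (a + 1) ∧
        v ≠ W (a + 3) ++ W (a + 1)) ↔
      ∃ y, F (a + 1) < y ∧ y < F (a + 3) + F (a + 1) ∧ v = pref y := by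
    intro v
    rw [pL, pW1]
    exact mem_char (M := a + 4) (by omega) (by omega) v
  have hiW : ∀ x, F (a + 4) < x → x < F (a + 5) →
      iotaW (pref x) = pref (x - 2 * F (a + 2)) := by
    intro x h1 h2
    unfold iotaW
    rw [pref_length]
    rw [iotaBar_eq (a + 4) x (by omega) h1 h2]
    rfl
  refine ⟨⟨?_, ?_, ?_⟩, ?_, ?_⟩
  · -- MapsTo
    intro v hv
    obtain ⟨x, hx1, hx2, rfl⟩ := (hS v).1 hv
    exact (hT _).2 ⟨x - 2 * F (a + 2), by omega, by omega, hiW x hx1 hx2⟩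
  · -- InjOn
    intro v1 h1 v2 h2 heq
    obtain ⟨x1, hx11, hx12, rfl⟩ := (hS v1).1 h1
    obtain ⟨x2, hx21, hx22, rfl⟩ := (hS v2).1 h2
    rw [hiW x1 hx11 hx12, hiW x2 hx21 hx22] at heq
    have := congrArg List.length heq
    rw [pref_length, pref_length] at this
    have : x1 = x2 := by omega
    rw [this]
  · -- SurjOn
    intro w hw
    obtain ⟨y, hy1, hy2, rfl⟩ := (hT w).1 hw
    refine ⟨pref (y + 2 * F (a + 2)), (hS _).2 ⟨y + 2 * F (a + 2), by omega, by omega, rfl⟩, ?_⟩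
    rw [hiW _ (by omega) (by omega)]
    congr 1
    omega
  · -- monotone
    intro u v hu hv huv
    obtain ⟨xu, hxu1, hxu2, rfl⟩ := (hS u).1 hu
    obtain ⟨xv, hxv1, hxv2, rfl⟩ := (hS v).1 hv
    have hle := huv.length_le
    rw [pref_length, pref_length] at hle
    rw [hiW xu hxu1 hxu2, hiW xv hxv1 hxv2]
    exact pref_mono (by omega)
  · -- explicit description
    intro w hw
    obtain ⟨x, hx1, hx2, rfl⟩ := (hS w).1 hw
    refine ⟨?_, ?_, ?_⟩
    · rintro ⟨hb1, hb2⟩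
      have hb1' := hb1
      have hb2' := hb2
      rw [pR] at hb1' hb2'
      have hxN : x < F (a + 4) + F (a + 2) - 1 := by
        have hle := hb1'.length_le
        rw [pref_length, pref_length] at hle
        rcases hle.lt_or_eq with h | h
        · exact h
        · exact absurd (congrArg pref h) hb2'
      have hWkpre : W (a + 4) <+: pref x := hw.1
      have hdec := eq_append_drop hWkpre
      rw [W_length] at hdec
      have hulen : ((pref x).drop (F (a + 4))).length = x - F (a + 4) := by
        rw [List.length_drop, pref_length]
      have hu2 : (pref x).drop (F (a + 4)) <+: (W (a + 2)).dropLast := by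
        rw [hdec] at hb1
        exact (List.prefix_append_right_inj _).1 hb1
      have huddl : (pref x).drop (F (a + 4)) <+: (W (a + 2)).dropLast.dropLast := by
        rw [List.dropLast_eq_take]
        exact prefix_take hu2 (by rw [hulen, List.length_dropLast, W_length]; omega)
      refine ⟨(pref x).drop (F (a + 4)), ?_, huddl, hdec, ?_⟩
      · intro h
        rw [h] at hulen
        simp at hulen
        omega
      · rw [hiW x hx1 hx2, key1 _ huddl, hulen]
        congr 1
        omega
    · intro hb
      rw [pR] at hb
      have hx : x = F (a + 4) + F (a + 2) - 1 := by
        have := congrArg List.length hb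
        rwa [pref_length, pref_length] at this
      rw [hiW x hx1 hx2, pD3]
      congr 1
      omega
    · rintro ⟨hb1, hb2⟩
      have hb1' := hb1
      have hb2' := hb2
      rw [pR] at hb1' hb2'
      have hxN : F (a + 4) + F (a + 2) - 1 < x := by
        have hle := hb1'.length_le
        rw [pref_length, pref_length] at hle
        rcases hle.lt_or_eq with h | h
        · exact h
        · exact absurd (congrArg pref h).symm hb2'
      have hP : W (a + 4) ++ W (a + 2) <+: pref x := by
        rw [pM]
        exact pref_mono (by omega)
      have hdec := eq_append_drop hP
      rw [List.length_append, W_length, W_length] at hdec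
      have hulen : ((pref x).drop (F (a + 4) + F (a + 2))).length
          = x - (F (a + 4) + F (a + 2)) := by
        rw [List.length_drop, pref_length]
      have hu1 : (pref x).drop (F (a + 4) + F (a + 2)) <+: W (a + 1) := by
        have h5 : W (a + 5) = (W (a + 4) ++ W (a + 2)) ++ W (a + 1) := by
          show W (a + 4) ++ W (a + 3) = _
          rw [show W (a + 3) = W (a + 2) ++ W (a + 1) from rfl, List.append_assoc]
        have hww : pref x <+: W (a + 5) := hw.2.1
        rw [hdec, h5] at hww
        exact (List.prefix_append_right_inj _).1 hww
      refine ⟨(pref x).drop (F (a + 4) + F (a + 2)), hu1, ?_, ?_, ?_⟩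
      · intro h
        have := congrArg List.length h
        rw [hulen, W_length] at this
        omega
      · exact hdec
      · rw [hiW x hx1 hx2, key3 _ hu1, hulen]
        congr 1
        omega
end
end
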